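/- (Corollary: RAC-LoRA with N full-gradient steps per block, non-convex case.) Let f : ℝ^{m×n} → ℝ be L-smooth and bounded below by f★. Let H^t be i.i.d. random orthogonal projections with λ_max^H := λ_max(E[H^t]) and D := 1 − λ_max(E[I − H^t]) − (1/4)·λ_max^H > 0. For each t, perform N gradient steps with the same projection: W^t_0 = W^t, W^t_{i+1} = W^t_i − γ·H^t·∇f(W^t_i) for i = 0, …, N−1, and set W^{t+1} = W^t_N, where 0 < γ ≤ 1/(2LN). Then, for W̃^T chosen uniformly at random from W^0, …, W^{T−1}, E[‖∇f(W̃^T)‖_F²] ≤ (2/(γ·N·T))·(f(W^0) − f★)/D. -/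

import Mathlib

open Matrix MeasureTheory ProbabilityTheory

attribute [local instance] Matrix.frobeniusSeminormedAddCommGroup Matrix.frobeniusNormedAddCommGroup Matrix.frobeniusNormedSpace

/-- The product measurable structure on matrices. -/
local instance matrixMeasurableSpace {a b : ℕ} : MeasurableSpace (Matrix (Fin a) (Fin b) ℝ) :=
  inferInstanceAs (MeasurableSpace ((Fin a) → (Fin b) → ℝ))

/-- Trace (Frobenius) inner product. -/
noncomputable def tinner {p q : ℕ} (X Y : Matrix (Fin p) (Fin q) ℝ) : ℝ := (Xᵀ * Y).trace

/-- `G` is the gradient field of `f` with respect to the trace inner product. -/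
def IsGradient {p q : ℕ} (f : Matrix (Fin p) (Fin q) ℝ → ℝ)
    (G : Matrix (Fin p) (Fin q) ℝ → Matrix (Fin p) (Fin q) ℝ) : Prop :=
  Differentiable ℝ f ∧ ∀ W V : Matrix (Fin p) (Fin q) ℝ, fderiv ℝ f W V = tinner (G W) V

/-- Lipschitz continuity (constant `L`) of a gradient field, in Frobenius norm. -/
def LipschitzGrad {p q : ℕ} (L : ℝ)
    (G : Matrix (Fin p) (Fin q) ℝ → Matrix (Fin p) (Fin q) ℝ) : Prop :=
  ∀ W V : Matrix (Fin p) (Fin q) ℝ, ‖G W - G V‖ ≤ L * ‖W - V‖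

/-- Smallest eigenvalue of a (symmetric) real matrix, as the infimum of its real spectrum. -/
noncomputable def lamMin {k : ℕ} (A : Matrix (Fin k) (Fin k) ℝ) : ℝ := sInf (spectrum ℝ A)

/-- Largest eigenvalue of a (symmetric) real matrix, as the supremum of its real spectrum. -/
noncomputable def lamMax {k : ℕ} (A : Matrix (Fin k) (Fin k) ℝ) : ℝ := sSup (spectrum ℝ A)

variable {p q : ℕ}
noncomputable local instance : InnerProductSpace ℝ (Matrix (Fin p) (Fin q) ℝ) where
  toNormedSpace := Matrix.frobeniusNormedSpace
  inner X Y := ∑ i, ∑ j, X i j * Y i j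
  norm_sq_eq_re_inner X := by
    rw [Matrix.frobenius_norm_def, ← Real.rpow_natCast, ← Real.rpow_mul (by positivity)]
    norm_num
    simp [sq]
  conj_inner_symm X Y := by simp [mul_comm]
  add_left X Y Z := by simp [add_mul, Finset.sum_add_distrib]
  smul_left X Y r := by simp [Finset.mul_sum, mul_assoc]
local instance : BorelSpace (Matrix (Fin p) (Fin q) ℝ) :=
  inferInstanceAs (BorelSpace ((Fin p) → (Fin q) → ℝ))

lemma inner_eq_sum' (X Y : Matrix (Fin p) (Fin q) ℝ) : (inner ℝ X Y : ℝ) = ∑ i, ∑ j, X i j * Y i j := by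
  rfl

lemma tinner_eq_inner (X Y : Matrix (Fin p) (Fin q) ℝ) : tinner X Y = inner ℝ X Y := by
  rw [inner_eq_sum']
  simp only [tinner, Matrix.trace, Matrix.mul_apply, Matrix.diag, Matrix.transpose_apply]
  rw [Finset.sum_comm]

lemma descent_lemma {f : Matrix (Fin p) (Fin q) ℝ → ℝ} {Gf : Matrix (Fin p) (Fin q) ℝ → Matrix (Fin p) (Fin q) ℝ}
    {L : ℝ} (hL : 0 ≤ L) (hgrad : IsGradient f Gf) (hlip : LipschitzGrad L Gf)
    (x y : Matrix (Fin p) (Fin q) ℝ) :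
    f y ≤ f x + tinner (Gf x) (y - x) + L * ‖y - x‖ ^ 2 := by
  have hfd : ∀ w, fderiv ℝ f w = innerSL ℝ (Gf w) := by
    intro w
    ext v
    rw [hgrad.2 w v, tinner_eq_inner]
    rfl
  set g : Matrix (Fin p) (Fin q) ℝ → ℝ := fun w => f w - (innerSL ℝ (Gf x)) w with hg
  have hgd : ∀ w, DifferentiableAt ℝ g w := fun w =>
    ((hgrad.1 w).sub ((innerSL ℝ (Gf x)).differentiableAt))
  have hgderiv : ∀ w, fderiv ℝ g w = innerSL ℝ (Gf w - Gf x) := by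
    intro w
    exact (((hgrad.1 w).hasFDerivAt.congr_fderiv (hfd w)).sub
      (innerSL ℝ (Gf x)).hasFDerivAt).fderiv.trans (map_sub _ _ _).symm
  have hbound : ∀ w ∈ segment ℝ x y, ‖innerSL ℝ (Gf w - Gf x)‖ ≤ L * ‖y - x‖ := by
    intro w hw
    rw [innerSL_apply_norm]
    obtain ⟨a, b, ha, hb, hab, rfl⟩ := hw
    have h1 : a • x + b • y - x = b • (y - x) := by
      rw [smul_sub]
      have hab' : a = 1 - b := by linarith
      rw [hab', sub_smul, one_smul]
      abel
    calc ‖Gf (a • x + b • y) - Gf x‖ ≤ L * ‖a • x + b • y - x‖ := hlip _ _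
      _ = L * (b * ‖y - x‖) := by rw [h1, norm_smul, Real.norm_eq_abs, abs_of_nonneg hb]
      _ ≤ L * (1 * ‖y - x‖) := by
          apply mul_le_mul_of_nonneg_left _ hL
          apply mul_le_mul_of_nonneg_right _ (norm_nonneg _)
          linarith
      _ = L * ‖y - x‖ := by ring
  have key := Convex.norm_image_sub_le_of_norm_hasFDerivWithin_le (fun w _ => ((((hgrad.1 w).hasFDerivAt.congr_fderiv (hfd w)).sub
      (innerSL ℝ (Gf x)).hasFDerivAt).congr_fderiv (map_sub _ _ _).symm).hasFDerivWithinAt) hbound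
    (convex_segment x y) (left_mem_segment ℝ x y) (right_mem_segment ℝ x y)
  have h2 : g y - g x ≤ L * ‖y - x‖ * ‖y - x‖ := le_trans (le_abs_self _) key
  have h3 : g y - g x = f y - f x - (inner ℝ (Gf x) (y - x) : ℝ) := by
    simp only [hg, innerSL_apply_apply]
    rw [inner_sub_right]
    ring_nf
  rw [tinner_eq_inner]
  nlinarith [h3 ▸ h2]

lemma proj_mul_norm_le {h : Matrix (Fin p) (Fin p) ℝ} (hsym : hᵀ = h) (hidem : h * h = h)
    (X : Matrix (Fin p) (Fin q) ℝ) : ‖h * X‖ ≤ ‖X‖ := by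
  have e1 : tinner (h * X) (h * X) = tinner X (h * X) := by
    simp only [tinner, Matrix.transpose_mul, hsym]
    rw [Matrix.mul_assoc, ← Matrix.mul_assoc h h X, hidem]
  have e2 : ‖h * X‖ ^ 2 = (inner ℝ X (h * X) : ℝ) := by
    rw [← tinner_eq_inner, ← e1, tinner_eq_inner, real_inner_self_eq_norm_sq]
  have e3 : (inner ℝ X (h * X) : ℝ) ≤ ‖X‖ * ‖h * X‖ := real_inner_le_norm _ _
  rcases eq_or_lt_of_le (norm_nonneg (h * X)) with h0 | h0
  · rw [← h0]; exact norm_nonneg X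
  · have : ‖h * X‖ * ‖h * X‖ ≤ ‖X‖ * ‖h * X‖ := by rw [← pow_two]; linarith
    exact le_of_mul_le_mul_right this h0

lemma tinner_proj {h : Matrix (Fin p) (Fin p) ℝ} (hsym : hᵀ = h) (hidem : h * h = h)
    (u v : Matrix (Fin p) (Fin q) ℝ) :
    (inner ℝ u (h * v) : ℝ) = (inner ℝ (h * u) (h * v) : ℝ) := by
  rw [← tinner_eq_inner, ← tinner_eq_inner]
  simp only [tinner, Matrix.transpose_mul, hsym]
  rw [Matrix.mul_assoc, ← Matrix.mul_assoc h h v, hidem]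

lemma sum_range_le_sq {n : ℕ} : (∑ i ∈ Finset.range n, (i : ℝ)) ≤ (n : ℝ) ^ 2 / 2 := by
  induction n with
  | zero => simp
  | succ k ih =>
    rw [Finset.sum_range_succ]
    push_cast
    nlinarith [ih]

set_option maxHeartbeats 1000000 in
lemma block_descent {f : Matrix (Fin p) (Fin q) ℝ → ℝ}
    {Gf : Matrix (Fin p) (Fin q) ℝ → Matrix (Fin p) (Fin q) ℝ}
    {L : ℝ} (hL : 0 < L) (hgrad : IsGradient f Gf) (hlip : LipschitzGrad L Gf)
    {γ : ℝ} (hγ0 : 0 < γ) {N : ℕ} (hN : 1 ≤ N) (hsmall : L * γ * N ≤ 1 / 2)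
    {h : Matrix (Fin p) (Fin p) ℝ} (hsym : hᵀ = h) (hidem : h * h = h)
    {w : ℕ → Matrix (Fin p) (Fin q) ℝ}
    (hrec : ∀ i < N, w (i + 1) = w i - γ • (h * Gf (w i))) :
    f (w N) + 3 / 8 * (γ * N) * ‖h * Gf (w 0)‖ ^ 2 ≤ f (w 0) := by
  have hNR : (0 : ℝ) < N := by exact_mod_cast hN
  set a : ℝ := ‖h * Gf (w 0)‖ with ha
  have ha0 : 0 ≤ a := norm_nonneg _
  set x : ℝ := L * γ with hx
  have hx0 : 0 < x := mul_pos hL hγ0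
  have hxN : x * N ≤ 1 / 2 := hsmall
  -- partial sums
  have hsum : ∀ i ≤ N, w i = w 0 - γ • ∑ j ∈ Finset.range i, h * Gf (w j) := by
    intro i hi
    induction i with
    | zero => simp
    | succ k ih =>
      have hk : k < N := hi
      rw [Finset.sum_range_succ, smul_add, hrec k hk, ih (le_of_lt hk)]
      abel
  -- distance bound
  have hdist : ∀ i ≤ N, ‖w i - w 0‖ ≤ γ * ∑ j ∈ Finset.range i, ‖h * Gf (w j)‖ := by
    intro i hi
    rw [hsum i hi]
    have : w 0 - γ • ∑ j ∈ Finset.range i, h * Gf (w j) - w 0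
        = -(γ • ∑ j ∈ Finset.range i, h * Gf (w j)) := by abel
    rw [this, norm_neg, norm_smul, Real.norm_eq_abs, abs_of_pos hγ0]
    exact mul_le_mul_of_nonneg_left (norm_sum_le _ _) hγ0.le
  -- uniform bound on the h-projected gradients
  have hb : ∀ j ≤ N, ‖h * Gf (w j)‖ ≤ 2 * a := by
    intro j
    induction j using Nat.strong_induction_on with
    | _ j ih =>
      intro hj
      have step1 : ‖h * Gf (w j)‖ ≤ a + L * ‖w j - w 0‖ := by
        have e : h * Gf (w j) = h * Gf (w 0) + h * (Gf (w j) - Gf (w 0)) := by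
          rw [Matrix.mul_sub]; abel
        calc ‖h * Gf (w j)‖ ≤ ‖h * Gf (w 0)‖ + ‖h * (Gf (w j) - Gf (w 0))‖ := by
              rw [e]; exact norm_add_le _ _
          _ ≤ a + ‖Gf (w j) - Gf (w 0)‖ := by
              gcongr; exact proj_mul_norm_le hsym hidem _
          _ ≤ a + L * ‖w j - w 0‖ := by gcongr; exact hlip _ _
      have step2 : ∑ k ∈ Finset.range j, ‖h * Gf (w k)‖ ≤ j * (2 * a) := by
        calc ∑ k ∈ Finset.range j, ‖h * Gf (w k)‖
            ≤ ∑ _k ∈ Finset.range j, (2 * a) := by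
              refine Finset.sum_le_sum fun k hk => ?_
              exact ih k (Finset.mem_range.mp hk) (le_trans (le_of_lt (Finset.mem_range.mp hk)) hj)
          _ = j * (2 * a) := by rw [Finset.sum_const, Finset.card_range, nsmul_eq_mul]
      have hjN : (j : ℝ) ≤ N := by exact_mod_cast hj
      have : ‖h * Gf (w j)‖ ≤ a + x * (j * (2 * a)) := by
        calc ‖h * Gf (w j)‖ ≤ a + L * ‖w j - w 0‖ := step1
          _ ≤ a + L * (γ * ∑ k ∈ Finset.range j, ‖h * Gf (w k)‖) := by
              gcongr; exact hdist j hj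
          _ = a + x * ∑ k ∈ Finset.range j, ‖h * Gf (w k)‖ := by rw [hx]; ring
          _ ≤ a + x * (j * (2 * a)) := by gcongr
      have hxj : x * (j : ℝ) ≤ 1 / 2 := le_trans (by nlinarith) hxN
      nlinarith
  -- deviation bound
  have hc : ∀ i ≤ N, ‖h * Gf (w i) - h * Gf (w 0)‖ ≤ 2 * a * x * i := by
    intro i hi
    have e : h * Gf (w i) - h * Gf (w 0) = h * (Gf (w i) - Gf (w 0)) := by
      rw [Matrix.mul_sub]
    rw [e]
    calc ‖h * (Gf (w i) - Gf (w 0))‖ ≤ ‖Gf (w i) - Gf (w 0)‖ := proj_mul_norm_le hsym hidem _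
      _ ≤ L * ‖w i - w 0‖ := hlip _ _
      _ ≤ L * (γ * ∑ k ∈ Finset.range i, ‖h * Gf (w k)‖) := by gcongr; exact hdist i hi
      _ ≤ L * (γ * (i * (2 * a))) := by
          gcongr
          calc ∑ k ∈ Finset.range i, ‖h * Gf (w k)‖ ≤ ∑ _k ∈ Finset.range i, (2 * a) := by
                refine Finset.sum_le_sum fun k hk => ?_
                exact hb k (le_trans (le_of_lt (Finset.mem_range.mp hk)) hi)
            _ = i * (2 * a) := by rw [Finset.sum_const, Finset.card_range, nsmul_eq_mul]
      _ = 2 * a * x * i := by rw [hx]; ring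
  -- the aggregated step
  set S : Matrix (Fin p) (Fin q) ℝ := ∑ i ∈ Finset.range N, h * Gf (w i) with hS
  set u : Matrix (Fin p) (Fin q) ℝ := h * Gf (w 0) with hu
  have hdev : ‖(N : ℝ) • u - S‖ ≤ a * N / 2 := by
    have e : (N : ℝ) • u - S = ∑ i ∈ Finset.range N, (u - h * Gf (w i)) := by
      rw [Finset.sum_sub_distrib, Finset.sum_const, Finset.card_range, hS, (Nat.cast_smul_eq_nsmul ℝ _ _).symm]
    rw [e]
    calc ‖∑ i ∈ Finset.range N, (u - h * Gf (w i))‖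
        ≤ ∑ i ∈ Finset.range N, ‖u - h * Gf (w i)‖ := norm_sum_le _ _
      _ ≤ ∑ i ∈ Finset.range N, 2 * a * x * i := by
          refine Finset.sum_le_sum fun i hi => ?_
          rw [norm_sub_rev]
          exact hc i (le_of_lt (Finset.mem_range.mp hi))
      _ = 2 * a * x * ∑ i ∈ Finset.range N, (i : ℝ) := by rw [Finset.mul_sum]
      _ ≤ 2 * a * x * ((N : ℝ) ^ 2 / 2) := by
          apply mul_le_mul_of_nonneg_left sum_range_le_sq
          positivity
      _ = (a * N) * (x * N) := by ring
      _ ≤ (a * N) * (1 / 2) := by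
          apply mul_le_mul_of_nonneg_left hxN
          positivity
      _ = a * N / 2 := by ring
  -- inner product identities
  have hwN : w N - w 0 = -(γ • S) := by rw [hsum N le_rfl]; abel
  set IP : ℝ := inner ℝ u S with hIP
  have e1 : (inner ℝ (Gf (w 0)) S : ℝ) = IP := by
    have eS : S = h * ∑ i ∈ Finset.range N, Gf (w i) := by
      rw [hS, Matrix.mul_sum]
    rw [hIP, hu, eS]
    exact tinner_proj hsym hidem _ _
  have e2 : 2 * (N : ℝ) * IP = (N : ℝ) ^ 2 * a ^ 2 + ‖S‖ ^ 2 - ‖(N : ℝ) • u - S‖ ^ 2 := by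
    have h1 : ‖(N : ℝ) • u - S‖ ^ 2
        = ‖(N : ℝ) • u‖ ^ 2 - 2 * inner ℝ ((N : ℝ) • u) S + ‖S‖ ^ 2 :=
      norm_sub_sq_real _ _
    have h2 : (inner ℝ ((N : ℝ) • u) S : ℝ) = (N : ℝ) * IP := real_inner_smul_left _ _ _
    have h3 : ‖(N : ℝ) • u‖ ^ 2 = (N : ℝ) ^ 2 * a ^ 2 := by
      rw [norm_smul, Real.norm_eq_abs, abs_of_pos hNR, mul_pow, ha]
    rw [h2, h3] at h1
    linarith
  -- descent
  have hdesc := descent_lemma hL.le hgrad hlip (w 0) (w N)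
  rw [tinner_eq_inner, hwN] at hdesc
  have e4 : (inner ℝ (Gf (w 0)) (-(γ • S)) : ℝ) = -(γ * IP) := by
    rw [inner_neg_right, real_inner_smul_right, e1]
  have e5 : ‖-(γ • S)‖ ^ 2 = γ ^ 2 * ‖S‖ ^ 2 := by
    rw [norm_neg, norm_smul, Real.norm_eq_abs, abs_of_pos hγ0, mul_pow]
  rw [e4, e5] at hdesc
  -- final arithmetic
  have hA : (0 : ℝ) ≤ ‖S‖ ^ 2 := sq_nonneg _
  have hB : ‖(N : ℝ) • u - S‖ ^ 2 ≤ a ^ 2 * (N : ℝ) ^ 2 / 4 := by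
    have := hdev
    nlinarith [norm_nonneg ((N : ℝ) • u - S)]
  have hcoef : 0 ≤ 1 - 2 * (N : ℝ) * L * γ := by nlinarith
  have goal2 : 3 / 8 * γ * (N : ℝ) * a ^ 2 ≤ γ * IP - L * γ ^ 2 * ‖S‖ ^ 2 := by
    have key : 3 / 8 * γ * (N : ℝ) * a ^ 2 * (2 * N)
        ≤ (γ * IP - L * γ ^ 2 * ‖S‖ ^ 2) * (2 * N) := by
      nlinarith [mul_nonneg (mul_nonneg hγ0.le hcoef) hA,
        mul_nonneg hγ0.le (sub_nonneg.mpr hB)]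
    exact le_of_mul_le_mul_right key (by positivity)
  calc f (w N) + 3 / 8 * (γ * ↑N) * ‖h * Gf (w 0)‖ ^ 2
      = f (w N) + 3 / 8 * γ * (N : ℝ) * a ^ 2 := by rw [ha]; ring
    _ ≤ f (w N) + (γ * IP - L * γ ^ 2 * ‖S‖ ^ 2) := by linarith
    _ ≤ f (w 0) := by linarith

-- entry bound and entry CLM
lemma entry_abs_le (X : Matrix (Fin p) (Fin q) ℝ) (i : Fin p) (j : Fin q) : |X i j| ≤ ‖X‖ := by
  have h1 : (X i j) ^ 2 ≤ (inner ℝ X X : ℝ) := by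
    rw [inner_eq_sum']
    have : (X i j) ^ 2 ≤ ∑ j', X i j' * X i j' := by
      simpa [sq] using Finset.single_le_sum (f := fun j' => X i j' * X i j')
        (fun j' _ => mul_self_nonneg _) (Finset.mem_univ j)
    calc (X i j) ^ 2 ≤ ∑ j', X i j' * X i j' := this
      _ ≤ ∑ i', ∑ j', X i' j' * X i' j' := by
          exact Finset.single_le_sum (f := fun i' => ∑ j', X i' j' * X i' j')
            (fun i' _ => Finset.sum_nonneg fun j' _ => mul_self_nonneg _) (Finset.mem_univ i)
  rw [real_inner_self_eq_norm_sq] at h1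
  calc |X i j| = Real.sqrt ((X i j) ^ 2) := (Real.sqrt_sq_eq_abs _).symm
    _ ≤ Real.sqrt (‖X‖ ^ 2) := Real.sqrt_le_sqrt h1
    _ = ‖X‖ := Real.sqrt_sq (norm_nonneg _)

noncomputable def entryCLM (i : Fin p) (j : Fin q) : Matrix (Fin p) (Fin q) ℝ →L[ℝ] ℝ :=
  LinearMap.mkContinuous
    { toFun := fun X => X i j, map_add' := fun _ _ => rfl, map_smul' := fun _ _ => rfl }
    1 (fun X => by rw [one_mul]; exact entry_abs_le X i j)

lemma integral_entry {Ω : Type*} [MeasurableSpace Ω] (μ : Measure Ω)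
    {X : Ω → Matrix (Fin p) (Fin q) ℝ} (hX : @Integrable _ _ SeminormedAddGroup.toContinuousENorm _ _ X μ) (i : Fin p) (j : Fin q) :
    (∫ ω, X ω ∂μ) i j = ∫ ω, X ω i j ∂μ :=
  (ContinuousLinearMap.integral_comp_comm (entryCLM i j) hX).symm

lemma integrable_entry {Ω : Type*} [MeasurableSpace Ω] {μ : Measure Ω}
    {X : Ω → Matrix (Fin p) (Fin q) ℝ} (hX : @Integrable _ _ SeminormedAddGroup.toContinuousENorm _ _ X μ) (i : Fin p) (j : Fin q) :
    Integrable (fun ω => X ω i j) μ :=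
  ContinuousLinearMap.integrable_comp (entryCLM i j) hX

-- projection entries are bounded by 1
lemma proj_entry_abs_le {h : Matrix (Fin p) (Fin p) ℝ} (hsym : hᵀ = h) (hidem : h * h = h)
    (k l : Fin p) : |h k l| ≤ 1 := by
  have hdiag : ∀ m : Fin p, h m m = ∑ i, h m i ^ 2 := by
    intro m
    have : (h * h) m m = h m m := by rw [hidem]
    rw [Matrix.mul_apply] at this
    rw [← this]
    refine Finset.sum_congr rfl fun i _ => ?_
    have : h i m = h m i := by
      simpa using congrFun (congrFun hsym m) i
    rw [this]; ring
  have hkk1 : h k k ≤ 1 := by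
    have h1 : h k k = ∑ i, h k i ^ 2 := hdiag k
    have h2 : h k k ^ 2 ≤ ∑ i, h k i ^ 2 :=
      Finset.single_le_sum (f := fun i => h k i ^ 2) (fun i _ => sq_nonneg _) (Finset.mem_univ k)
    nlinarith [h1 ▸ h2]
  have hsq : h k l ^ 2 ≤ h k k := by
    rw [hdiag k]
    exact Finset.single_le_sum (f := fun i => h k i ^ 2) (fun i _ => sq_nonneg _) (Finset.mem_univ l)
  have : h k l ^ 2 ≤ 1 := le_trans hsq hkk1
  nlinarith [abs_nonneg (h k l), sq_abs (h k l)]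

-- Hermitian from transpose over ℝ
lemma isHermitian_of_transpose {k : ℕ} {M : Matrix (Fin k) (Fin k) ℝ} (hM : Mᵀ = M) :
    M.IsHermitian := by
  have : Mᴴ = Mᵀ := by
    ext i j
    simp [Matrix.conjTranspose_apply, Matrix.transpose_apply]
  rw [Matrix.IsHermitian, this, hM]

-- quadratic form bounded by the largest eigenvalue
lemma quadform_le_lamMax {k : ℕ} {M : Matrix (Fin k) (Fin k) ℝ} (hM : M.IsHermitian)
    (v : Matrix (Fin k) (Fin q) ℝ) :
    tinner v (M * v) ≤ lamMax M * tinner v v := by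
  classical
  set U : Matrix (Fin k) (Fin k) ℝ := (hM.eigenvectorUnitary : Matrix (Fin k) (Fin k) ℝ) with hU
  set d : Fin k → ℝ := hM.eigenvalues with hd
  have hspec : M = U * Matrix.diagonal d * star U := by
    have h1 := hM.spectral_theorem
    have h2 : (RCLike.ofReal ∘ d : Fin k → ℝ) = d := by
      funext i; simp [RCLike.ofReal_real_eq_id]
    rw [h2] at h1
    exact h1
  have hU1 : U * star U = 1 := (Matrix.mem_unitaryGroup_iff).mp hM.eigenvectorUnitary.2
  have hUT : (star U)ᵀ = U := by
    ext i j
    simp [Matrix.transpose_apply, Matrix.star_apply]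
  set w : Matrix (Fin k) (Fin q) ℝ := star U * v with hw
  have key1 : tinner v (M * v) = tinner w (Matrix.diagonal d * w) := by
    simp only [tinner, hw, Matrix.transpose_mul, hUT]
    rw [hspec]
    congr 1
    simp only [Matrix.mul_assoc]
  have key2 : tinner w w = tinner v v := by
    simp only [tinner, hw, Matrix.transpose_mul, hUT]
    rw [Matrix.mul_assoc, ← Matrix.mul_assoc U (star U) v, hU1, Matrix.one_mul]
  have hdle : ∀ i, d i ≤ lamMax M := by
    intro i
    exact le_csSup (Set.Finite.bddAbove M.finite_real_spectrum)
      (hM.eigenvalues_mem_spectrum_real i)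
  have e1 : tinner w (Matrix.diagonal d * w) = ∑ i, ∑ j, d i * w i j ^ 2 := by
    rw [tinner_eq_inner, inner_eq_sum']
    refine Finset.sum_congr rfl fun i _ => Finset.sum_congr rfl fun j _ => ?_
    rw [Matrix.diagonal_mul]
    ring
  have e2 : tinner w w = ∑ i, ∑ j, w i j ^ 2 := by
    rw [tinner_eq_inner, inner_eq_sum']
    refine Finset.sum_congr rfl fun i _ => Finset.sum_congr rfl fun j _ => ?_
    ring
  rw [key1, ← key2, e1, e2, Finset.mul_sum]
  refine Finset.sum_le_sum fun i _ => ?_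
  rw [Finset.mul_sum]
  refine Finset.sum_le_sum fun j _ => ?_
  exact mul_le_mul_of_nonneg_right (hdle i) (sq_nonneg _)

section Meas
variable {α : Type*} [MeasurableSpace α]

lemma measurable_entry_comp {a b : ℕ} {X : α → Matrix (Fin a) (Fin b) ℝ} (hX : Measurable X)
    (i : Fin a) (j : Fin b) : Measurable fun ω => X ω i j := by
  have h1 : Measurable fun m : Matrix (Fin a) (Fin b) ℝ => m i j :=
    (measurable_pi_apply j).comp (measurable_pi_apply i)
  exact h1.comp hX

lemma measurable_matrix_of_entries {a b : ℕ} {X : α → Matrix (Fin a) (Fin b) ℝ}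
    (hX : ∀ i j, Measurable fun ω => X ω i j) : Measurable X := by
  refine measurable_pi_iff.mpr ?_
  intro i
  rw [measurable_pi_iff]
  exact hX i

lemma Measurable.matrix_mul'' {a b c : ℕ} {A : α → Matrix (Fin a) (Fin b) ℝ}
    {B : α → Matrix (Fin b) (Fin c) ℝ} (hA : Measurable A) (hB : Measurable B) :
    Measurable fun ω => A ω * B ω := by
  apply measurable_matrix_of_entries
  intro i j
  simp only [Matrix.mul_apply]
  exact Finset.measurable_sum _ fun k _ =>
    (measurable_entry_comp hA i k).mul (measurable_entry_comp hB k j)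

lemma Measurable.matrix_sub' {a b : ℕ} {A B : α → Matrix (Fin a) (Fin b) ℝ}
    (hA : Measurable A) (hB : Measurable B) : Measurable fun ω => A ω - B ω := by
  apply measurable_matrix_of_entries
  intro i j
  exact (measurable_entry_comp hA i j).sub (measurable_entry_comp hB i j)

lemma Measurable.matrix_smul' {a b : ℕ} {c : ℝ} {A : α → Matrix (Fin a) (Fin b) ℝ}
    (hA : Measurable A) : Measurable fun ω => c • A ω := by
  apply measurable_matrix_of_entries
  intro i j
  simpa [Matrix.smul_apply] using (measurable_entry_comp hA i j).const_mul c

lemma Measurable.matrix_transpose' {a b : ℕ} {A : α → Matrix (Fin a) (Fin b) ℝ}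
    (hA : Measurable A) : Measurable fun ω => (A ω)ᵀ := by
  apply measurable_matrix_of_entries
  intro i j
  simpa [Matrix.transpose_apply] using measurable_entry_comp hA j i

end Meas

section Step

variable (Gf : Matrix (Fin p) (Fin q) ℝ → Matrix (Fin p) (Fin q) ℝ) (γ : ℝ)

/-- `N` inner iterations with a fixed projection `h`, starting from `w`. -/
noncomputable def stepIter : ℕ → Matrix (Fin p) (Fin p) ℝ → Matrix (Fin p) (Fin q) ℝ →
    Matrix (Fin p) (Fin q) ℝ
  | 0, _, w => w
  | (i + 1), h, w => stepIter i h w - γ • (h * Gf (stepIter i h w))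

variable {Gf γ}

lemma stepIter_measurable (hGf : Measurable Gf) (i : ℕ) :
    Measurable fun z : Matrix (Fin p) (Fin p) ℝ × Matrix (Fin p) (Fin q) ℝ =>
      stepIter Gf γ i z.1 z.2 := by
  induction i with
  | zero => exact measurable_snd
  | succ k ih =>
    exact ih.matrix_sub' ((measurable_fst.matrix_mul'' (hGf.comp ih)).matrix_smul')

lemma stepIter_norm_bound {L : ℝ} (hL : 0 < L) (hlip : LipschitzGrad L Gf) (hγ0 : 0 < γ)
    (i : ℕ) {C : ℝ} (hC : 0 ≤ C) :
    ∃ C' : ℝ, 0 ≤ C' ∧ ∀ (h : Matrix (Fin p) (Fin p) ℝ) (w : Matrix (Fin p) (Fin q) ℝ),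
      hᵀ = h → h * h = h → ‖w‖ ≤ C → ‖stepIter Gf γ i h w‖ ≤ C' := by
  induction i with
  | zero => exact ⟨C, hC, fun h w _ _ hw => hw⟩
  | succ k ih =>
    obtain ⟨C', hC'0, hC'⟩ := ih
    refine ⟨C' + γ * (‖Gf 0‖ + L * C'), by positivity, fun h w hsym hidem hw => ?_⟩
    have h1 : ‖stepIter Gf γ k h w‖ ≤ C' := hC' h w hsym hidem hw
    have h2 : ‖Gf (stepIter Gf γ k h w)‖ ≤ ‖Gf 0‖ + L * C' := by
      calc ‖Gf (stepIter Gf γ k h w)‖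
          ≤ ‖Gf (stepIter Gf γ k h w) - Gf 0‖ + ‖Gf 0‖ := by
            have := norm_add_le (Gf (stepIter Gf γ k h w) - Gf 0) (Gf 0)
            simpa using this
        _ ≤ L * ‖stepIter Gf γ k h w - 0‖ + ‖Gf 0‖ := by gcongr; exact hlip _ _
        _ ≤ L * C' + ‖Gf 0‖ := by
            rw [sub_zero]
            have := mul_le_mul_of_nonneg_left h1 hL.le
            linarith
        _ = ‖Gf 0‖ + L * C' := by ring
    calc ‖stepIter Gf γ (k + 1) h w‖
        ≤ ‖stepIter Gf γ k h w‖ + ‖γ • (h * Gf (stepIter Gf γ k h w))‖ := norm_sub_le _ _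
      _ ≤ C' + γ * (‖Gf 0‖ + L * C') := by
          refine add_le_add h1 ?_
          rw [norm_smul, Real.norm_eq_abs, abs_of_pos hγ0]
          refine mul_le_mul_of_nonneg_left ?_ hγ0.le
          exact le_trans (proj_mul_norm_le hsym hidem _) h2

end Step

lemma proj_norm_sq {h : Matrix (Fin p) (Fin p) ℝ} (hsym : hᵀ = h) (hidem : h * h = h)
    (X : Matrix (Fin p) (Fin q) ℝ) : ‖h * X‖ ^ 2 = tinner X (h * X) := by
  have e1 : tinner (h * X) (h * X) = tinner X (h * X) := by
    simp only [tinner, Matrix.transpose_mul, hsym]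
    rw [Matrix.mul_assoc, ← Matrix.mul_assoc h h X, hidem]
  rw [← e1, tinner_eq_inner, real_inner_self_eq_norm_sq]

lemma tinner_self_eq_norm_sq (X : Matrix (Fin p) (Fin q) ℝ) : tinner X X = ‖X‖ ^ 2 := by
  rw [tinner_eq_inner, real_inner_self_eq_norm_sq]

lemma tinner_sub_right (X : Matrix (Fin p) (Fin q) ℝ) (A B : Matrix (Fin p) (Fin q) ℝ) :
    tinner X (A - B) = tinner X A - tinner X B := by
  simp only [tinner, Matrix.mul_sub, Matrix.trace_sub]

lemma tinner_mul_rep (A : Matrix (Fin p) (Fin p) ℝ) (v : Matrix (Fin p) (Fin q) ℝ) :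
    tinner v (A * v) = ∑ k, ∑ l, A k l * (v * vᵀ) l k := by
  rw [tinner, Matrix.trace_mul_comm, Matrix.mul_assoc]
  simp only [Matrix.trace, Matrix.diag, Matrix.mul_apply (M := A)]

lemma psi_entry_abs_le {L g0 C : ℝ} (hL : 0 ≤ L) {Gf : Matrix (Fin p) (Fin q) ℝ → Matrix (Fin p) (Fin q) ℝ}
    (hGf : ∀ w, ‖Gf w‖ ≤ g0 + L * ‖w‖) {w : Matrix (Fin p) (Fin q) ℝ} (hw : ‖w‖ ≤ C) (hC : 0 ≤ C)
    (l k : Fin p) : |(Gf w * (Gf w)ᵀ) l k| ≤ (g0 + L * C) ^ 2 := by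
  have h1 : ‖Gf w‖ ≤ g0 + L * C := by
    calc ‖Gf w‖ ≤ g0 + L * ‖w‖ := hGf w
      _ ≤ g0 + L * C := by nlinarith
  calc |(Gf w * (Gf w)ᵀ) l k| ≤ ‖Gf w * (Gf w)ᵀ‖ := entry_abs_le _ l k
    _ ≤ ‖Gf w‖ * ‖(Gf w)ᵀ‖ := Matrix.frobenius_norm_mul _ _
    _ = ‖Gf w‖ * ‖Gf w‖ := by rw [Matrix.frobenius_norm_transpose]
    _ ≤ (g0 + L * C) ^ 2 := by nlinarith [norm_nonneg (Gf w), le_trans (norm_nonneg (Gf w)) h1]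


set_option maxHeartbeats 2000000 in
/-- Corollary: RAC-LoRA with `N` full-gradient steps per block, non-convex case
(the `σ = 0` case of the Random Reshuffling analysis). -/
theorem stmt12 {p q N : ℕ} {Ω : Type*} [MeasurableSpace Ω] (μ : Measure Ω)
    [IsProbabilityMeasure μ]
    (f : Matrix (Fin p) (Fin q) ℝ → ℝ) (Gf : Matrix (Fin p) (Fin q) ℝ → Matrix (Fin p) (Fin q) ℝ)
    (L fstar : ℝ) (hL : 0 < L)
    (hgrad : IsGradient f Gf) (hlip : LipschitzGrad L Gf)
    (hbelow : ∀ W, fstar ≤ f W)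
    (H : ℕ → Ω → Matrix (Fin p) (Fin p) ℝ)
    (hHmeas : ∀ t, Measurable (H t)) (hHint : ∀ t, @Integrable _ _ SeminormedAddGroup.toContinuousENorm _ _ (H t) μ)
    (hproj : ∀ t, ∀ᵐ ω ∂μ, (H t ω)ᵀ = H t ω ∧ H t ω * H t ω = H t ω)
    (hindep : iIndepFun (m := fun _ => matrixMeasurableSpace) H μ)
    (hid : ∀ s t, IdentDistrib (H s) (H t) μ μ)
    (lamH lamIH D : ℝ)
    (hlamH : ∀ t, lamMax (∫ ω, H t ω ∂μ) = lamH)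
    (hlamIH : ∀ t, lamMax (∫ ω, ((1 : Matrix (Fin p) (Fin p) ℝ) - H t ω) ∂μ) = lamIH)
    (hD : D = 1 - lamIH - (1 / 4) * lamH) (hD0 : 0 < D)
    (γ : ℝ) (hγ0 : 0 < γ) (hγ : γ ≤ 1 / (2 * L * N))
    (W : ℕ → Ω → Matrix (Fin p) (Fin q) ℝ) (W0 : Matrix (Fin p) (Fin q) ℝ)
    (Wit : ℕ → ℕ → Ω → Matrix (Fin p) (Fin q) ℝ)
    (hW0 : ∀ ω, W 0 ω = W0)
    (hWit0 : ∀ t ω, Wit t 0 ω = W t ω)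
    (hrec : ∀ t ω (i : Fin N), Wit t (i + 1) ω = Wit t i ω - γ • (H t ω * Gf (Wit t i ω)))
    (hWend : ∀ t ω, W (t + 1) ω = Wit t N ω)
    (T : ℕ) (hT : 0 < T) :
    (1 / T : ℝ) * ∑ t ∈ Finset.range T, ∫ ω, ‖Gf (W t ω)‖ ^ 2 ∂μ ≤
      (2 / (γ * N * T)) * (f W0 - fstar) / D := by
  -- basic positivity facts
  have hN : 1 ≤ N := by
    rcases Nat.eq_zero_or_pos N with h0 | h1
    · exfalso
      rw [h0] at hγ
      simp only [Nat.cast_zero, mul_zero, div_zero] at hγ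
      linarith
    · exact h1
  have hNR : (0 : ℝ) < N := by exact_mod_cast hN
  have hTR : (0 : ℝ) < T := by exact_mod_cast hT
  have hsmall : L * γ * N ≤ 1 / 2 := by
    have h2LN : (0 : ℝ) < 2 * L * N := by positivity
    have := (le_div_iff₀ h2LN).mp hγ
    nlinarith
  -- continuity and measurability of the data
  have hGf_cont : Continuous Gf := by
    have hlipW : LipschitzWith (Real.toNNReal L) Gf := by
      apply LipschitzWith.of_dist_le_mul
      intro a b
      rw [dist_eq_norm, dist_eq_norm, Real.coe_toNNReal L hL.le]
      exact hlip a b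
    exact hlipW.continuous
  have hGf_meas : Measurable Gf := hGf_cont.measurable
  have hf_cont : Continuous f := hgrad.1.continuous
  set g0 : ℝ := ‖Gf 0‖ with hg0
  have hg00 : 0 ≤ g0 := norm_nonneg _
  have hGf_norm : ∀ w, ‖Gf w‖ ≤ g0 + L * ‖w‖ := by
    intro w
    calc ‖Gf w‖ ≤ ‖Gf w - Gf 0‖ + ‖Gf 0‖ := by
          have := norm_add_le (Gf w - Gf 0) (Gf 0); simpa using this
      _ ≤ L * ‖w - 0‖ + g0 := by gcongr; exact hlip _ _
      _ = g0 + L * ‖w‖ := by rw [sub_zero]; ring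
  have hfabs : ∀ w : Matrix (Fin p) (Fin q) ℝ, |f w| ≤ |f 0| + g0 * ‖w‖ + 2 * L * ‖w‖ ^ 2 := by
    intro w
    have h1 := descent_lemma hL.le hgrad hlip 0 w
    have h2 := descent_lemma hL.le hgrad hlip w 0
    rw [tinner_eq_inner] at h1 h2
    have e1 : (inner ℝ (Gf 0) (w - 0) : ℝ) ≤ g0 * ‖w‖ := by
      calc (inner ℝ (Gf 0) (w - 0) : ℝ) ≤ ‖Gf 0‖ * ‖w - 0‖ := real_inner_le_norm _ _
        _ = g0 * ‖w‖ := by rw [sub_zero]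
    have e2 : (inner ℝ (Gf w) (0 - w) : ℝ) ≤ (g0 + L * ‖w‖) * ‖w‖ := by
      calc (inner ℝ (Gf w) (0 - w) : ℝ) ≤ ‖Gf w‖ * ‖0 - w‖ := real_inner_le_norm _ _
        _ = ‖Gf w‖ * ‖w‖ := by rw [zero_sub, norm_neg]
        _ ≤ (g0 + L * ‖w‖) * ‖w‖ :=
            mul_le_mul_of_nonneg_right (hGf_norm w) (norm_nonneg _)
    have e3 : ‖w - 0‖ = ‖w‖ := by rw [sub_zero]
    have e4 : ‖0 - w‖ = ‖w‖ := by rw [zero_sub, norm_neg]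
    rw [e3] at h1
    rw [e4] at h2
    rw [abs_le]
    constructor
    · nlinarith [abs_nonneg (f 0), le_abs_self (f 0), neg_abs_le (f 0), norm_nonneg w,
        sq_nonneg ‖w‖]
    · nlinarith [le_abs_self (f 0), norm_nonneg w, sq_nonneg ‖w‖]
  -- identification of the iterates
  have hWit_eq : ∀ t ω i, i ≤ N → Wit t i ω = stepIter Gf γ i (H t ω) (W t ω) := by
    intro t ω i
    induction i with
    | zero => intro _; rw [hWit0]; rfl
    | succ k ih =>
      intro hk
      have hkN : k < N := hk
      have := hrec t ω ⟨k, hkN⟩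
      simp only [Fin.val_mk] at this
      rw [this, ih (le_of_lt hkN)]
      rfl
  have hWstep : ∀ t ω, W (t + 1) ω = stepIter Gf γ N (H t ω) (W t ω) := fun t ω => by
    rw [hWend, hWit_eq t ω N le_rfl]
  have hWmeas : ∀ t, Measurable (W t) := by
    intro t
    induction t with
    | zero =>
      have : W 0 = fun _ => W0 := funext hW0
      rw [this]; exact measurable_const
    | succ k ih =>
      have : W (k + 1) = (fun z : Matrix (Fin p) (Fin p) ℝ × Matrix (Fin p) (Fin q) ℝ =>
          stepIter Gf γ N z.1 z.2) ∘ (fun ω => (H k ω, W k ω)) := funext fun ω => hWstep k ω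
      rw [this]
      exact (stepIter_measurable hGf_meas N).comp ((hHmeas k).prodMk ih)
  have hWbound : ∀ t, ∃ C : ℝ, 0 ≤ C ∧ ∀ᵐ ω ∂μ, ‖W t ω‖ ≤ C := by
    intro t
    induction t with
    | zero =>
      exact ⟨‖W0‖, norm_nonneg _, Filter.Eventually.of_forall fun ω => by rw [hW0]⟩
    | succ k ih =>
      obtain ⟨C, hC0, hCae⟩ := ih
      obtain ⟨C', hC'0, hC'⟩ := stepIter_norm_bound hL hlip hγ0 N hC0
      refine ⟨C', hC'0, ?_⟩
      filter_upwards [hCae, hproj k] with ω h1 h2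
      rw [hWstep k ω]
      exact hC' _ _ h2.1 h2.2 h1
  -- independence of W t and H t
  have hIndepWH : ∀ t, IndepFun (W t) (H t) μ := by
    intro t
    -- W t is a measurable function of (H 0, ..., H (t-1))
    have hrep : ∃ Φ : ((Fin t) → Matrix (Fin p) (Fin p) ℝ) → Matrix (Fin p) (Fin q) ℝ,
        Measurable Φ ∧ ∀ ω, W t ω = Φ (fun s => H s ω) := by
      induction t with
      | zero => exact ⟨fun _ => W0, measurable_const, fun ω => hW0 ω⟩
      | succ k ih =>
        obtain ⟨Φ, hΦm, hΦ⟩ := ih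
        refine ⟨fun v => stepIter Gf γ N (v (Fin.last k)) (Φ fun s : Fin k => v s.castSucc),
          ?_, ?_⟩
        · have h1 : Measurable fun v : Fin (k + 1) → Matrix (Fin p) (Fin p) ℝ =>
              (v (Fin.last k), Φ fun s : Fin k => v s.castSucc) :=
            (measurable_pi_apply _).prodMk
              (hΦm.comp (measurable_pi_lambda _ fun s => measurable_pi_apply _))
          exact (stepIter_measurable hGf_meas N).comp h1
        · intro ω
          rw [hWstep k ω, hΦ ω]
          rfl
    obtain ⟨Φ, hΦm, hΦ⟩ := hrep
    have hdisj : Disjoint (Finset.range t) ({t} : Finset ℕ) := by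
      simp [Finset.disjoint_singleton_right]
    have hbase := hindep.indepFun_finset (Finset.range t) ({t} : Finset ℕ) hdisj hHmeas
    set φ : ((i : (Finset.range t : Finset ℕ)) → Matrix (Fin p) (Fin p) ℝ) →
        Matrix (Fin p) (Fin q) ℝ :=
      fun g => Φ (fun s : Fin t => g ⟨(s : ℕ), Finset.mem_range.mpr s.isLt⟩) with hφ
    set ψ : ((i : ({t} : Finset ℕ)) → Matrix (Fin p) (Fin p) ℝ) → Matrix (Fin p) (Fin p) ℝ :=
      fun g => g ⟨t, Finset.mem_singleton_self t⟩ with hψ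
    have hφm : Measurable φ :=
      hΦm.comp (measurable_pi_lambda _ fun s => measurable_pi_apply _)
    have hψm : Measurable ψ := measurable_pi_apply _
    have hcomp := hbase.comp hφm hψm
    have e1 : (φ ∘ fun a (i : (Finset.range t : Finset ℕ)) => H i a) = W t := by
      funext ω
      rw [Function.comp_apply, hφ, hΦ ω]
    have e2 : (ψ ∘ fun a (i : (({t} : Finset ℕ) : Finset ℕ)) => H i a) = H t := by
      funext ω
      rfl
    rwa [e1, e2] at hcomp
  -- per-step inequality
  have int_f : ∀ t, Integrable (fun ω => f (W t ω)) μ := by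
    intro t
    obtain ⟨C, hC0, hCae⟩ := hWbound t
    refine Integrable.mono' (integrable_const (|f 0| + g0 * C + 2 * L * C ^ 2))
      ((hf_cont.measurable.comp (hWmeas t)).aestronglyMeasurable) ?_
    filter_upwards [hCae] with ω hω
    rw [Real.norm_eq_abs]
    calc |f (W t ω)| ≤ |f 0| + g0 * ‖W t ω‖ + 2 * L * ‖W t ω‖ ^ 2 := hfabs _
      _ ≤ |f 0| + g0 * C + 2 * L * C ^ 2 := by
          have h1 : g0 * ‖W t ω‖ ≤ g0 * C := mul_le_mul_of_nonneg_left hω hg00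
          have h2 : ‖W t ω‖ ^ 2 ≤ C ^ 2 := pow_le_pow_left₀ (norm_nonneg _) hω 2
          nlinarith
  have key : ∀ t, ∫ ω, f (W (t + 1) ω) ∂μ + γ * N * D / 2 * ∫ ω, ‖Gf (W t ω)‖ ^ 2 ∂μ
      ≤ ∫ ω, f (W t ω) ∂μ := by
    intro t
    obtain ⟨C, hC0, hCae⟩ := hWbound t
    set Mt : Matrix (Fin p) (Fin p) ℝ := ∫ ω, H t ω ∂μ with hMtdef
    have hGWm : Measurable fun ω => Gf (W t ω) := hGf_meas.comp (hWmeas t)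
    have hψm : ∀ l k : Fin p, Measurable fun ω =>
        (Gf (W t ω) * (Gf (W t ω))ᵀ) l k := fun l k =>
      measurable_entry_comp (hGWm.matrix_mul'' hGWm.matrix_transpose') l k
    have int_ψ : ∀ l k : Fin p, Integrable (fun ω => (Gf (W t ω) * (Gf (W t ω))ᵀ) l k) μ := by
      intro l k
      refine Integrable.mono' (integrable_const ((g0 + L * C) ^ 2))
        (hψm l k).aestronglyMeasurable ?_
      filter_upwards [hCae] with ω hω
      rw [Real.norm_eq_abs]
      exact psi_entry_abs_le hL.le hGf_norm hω hC0 l k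
    have int_prod : ∀ k l : Fin p,
        Integrable (fun ω => H t ω k l * (Gf (W t ω) * (Gf (W t ω))ᵀ) l k) μ := by
      intro k l
      refine Integrable.mono' (integrable_const (1 * (g0 + L * C) ^ 2))
        (((measurable_entry_comp (hHmeas t) k l).mul (hψm l k)).aestronglyMeasurable) ?_
      filter_upwards [hCae, hproj t] with ω hω hp
      rw [Real.norm_eq_abs, abs_mul]
      exact mul_le_mul (proj_entry_abs_le hp.1 hp.2 k l)
        (psi_entry_abs_le hL.le hGf_norm hω hC0 l k) (abs_nonneg _) zero_le_one
    -- expectation of each product splits by independence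
    have hEprod : ∀ k l : Fin p,
        ∫ ω, H t ω k l * (Gf (W t ω) * (Gf (W t ω))ᵀ) l k ∂μ
          = Mt k l * ∫ ω, (Gf (W t ω) * (Gf (W t ω))ᵀ) l k ∂μ := by
      intro k l
      have mX : Measurable fun m : Matrix (Fin p) (Fin p) ℝ => m k l :=
        (measurable_pi_apply l).comp (measurable_pi_apply k)
      have mY : Measurable fun w : Matrix (Fin p) (Fin q) ℝ => (Gf w * (Gf w)ᵀ) l k :=
        measurable_entry_comp (hGf_meas.matrix_mul'' hGf_meas.matrix_transpose') l k
      have hXY : IndepFun (fun ω => H t ω k l)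
          (fun ω => (Gf (W t ω) * (Gf (W t ω))ᵀ) l k) μ :=
        (hIndepWH t).symm.comp mX mY
      have hmul := hXY.integral_mul_eq_mul_integral (integrable_entry (hHint t) k l).aestronglyMeasurable (int_ψ l k).aestronglyMeasurable
      have e1 : ((fun ω => H t ω k l) * fun ω => (Gf (W t ω) * (Gf (W t ω))ᵀ) l k)
          = fun ω => H t ω k l * (Gf (W t ω) * (Gf (W t ω))ᵀ) l k := rfl
      rw [e1] at hmul
      rw [hmul, hMtdef, integral_entry μ (hHint t) k l]
    have repH : (fun ω => tinner (Gf (W t ω)) (H t ω * Gf (W t ω)))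
        = fun ω => ∑ k, ∑ l, H t ω k l * (Gf (W t ω) * (Gf (W t ω))ᵀ) l k :=
      funext fun ω => tinner_mul_rep _ _
    have repM : (fun ω => tinner (Gf (W t ω)) (Mt * Gf (W t ω)))
        = fun ω => ∑ k, ∑ l, Mt k l * (Gf (W t ω) * (Gf (W t ω))ᵀ) l k :=
      funext fun ω => tinner_mul_rep _ _
    have int_tinnerH : Integrable (fun ω => tinner (Gf (W t ω)) (H t ω * Gf (W t ω))) μ := by
      rw [repH]
      exact integrable_finset_sum _ fun k _ => integrable_finset_sum _ fun l _ => int_prod k l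
    have int_tinnerM : Integrable (fun ω => tinner (Gf (W t ω)) (Mt * Gf (W t ω))) μ := by
      rw [repM]
      exact integrable_finset_sum _ fun k _ => integrable_finset_sum _ fun l _ =>
        (int_ψ l k).const_mul _
    have E1 : ∫ ω, tinner (Gf (W t ω)) (H t ω * Gf (W t ω)) ∂μ
        = ∫ ω, tinner (Gf (W t ω)) (Mt * Gf (W t ω)) ∂μ := by
      rw [repH, repM]
      rw [integral_finset_sum _ fun k _ => integrable_finset_sum _ fun l _ => int_prod k l,
        integral_finset_sum _ fun k _ => integrable_finset_sum _ fun l _ =>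
          (int_ψ l k).const_mul (Mt k l)]
      refine Finset.sum_congr rfl fun k _ => ?_
      rw [integral_finset_sum _ fun l _ => int_prod k l,
        integral_finset_sum _ fun l _ => (int_ψ l k).const_mul (Mt k l)]
      refine Finset.sum_congr rfl fun l _ => ?_
      rw [hEprod k l, integral_const_mul]
    -- spectral bound, pointwise
    have hMtsym : Mtᵀ = Mt := by
      ext k l
      rw [Matrix.transpose_apply, hMtdef, integral_entry μ (hHint t) l k,
        integral_entry μ (hHint t) k l]
      refine integral_congr_ae ?_
      filter_upwards [hproj t] with ω hp
      have := congrFun (congrFun hp.1 k) l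
      simpa using this
    have hintsub : ∫ ω, ((1 : Matrix (Fin p) (Fin p) ℝ) - H t ω) ∂μ = 1 - Mt := by
      rw [integral_sub (integrable_const _) (hHint t), integral_const]
      simp
      exact hMtdef.symm
    have hlamMt : lamMax Mt = lamH := hlamH t
    have hlamMt1 : lamMax (1 - Mt) = lamIH := by rw [← hintsub]; exact hlamIH t
    have E3 : ∀ ω, D * ‖Gf (W t ω)‖ ^ 2 ≤ 3 / 4 * tinner (Gf (W t ω)) (Mt * Gf (W t ω)) := by
      intro ω
      set v := Gf (W t ω)
      have h2 : tinner v (Mt * v) ≤ lamH * tinner v v := by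
        rw [← hlamMt]
        exact quadform_le_lamMax (isHermitian_of_transpose hMtsym) v
      have h1 : tinner v ((1 - Mt) * v) ≤ lamIH * tinner v v := by
        rw [← hlamMt1]
        refine quadform_le_lamMax (isHermitian_of_transpose ?_) v
        rw [Matrix.transpose_sub, Matrix.transpose_one, hMtsym]
      have h3 : tinner v ((1 - Mt) * v) = tinner v v - tinner v (Mt * v) := by
        rw [Matrix.sub_mul, Matrix.one_mul, tinner_sub_right]
      have h4 : tinner v v = ‖v‖ ^ 2 := tinner_self_eq_norm_sq v
      rw [hD]
      nlinarith [h1, h2, h3, h4]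
    have int_G2 : Integrable (fun ω => ‖Gf (W t ω)‖ ^ 2) μ := by
      refine Integrable.mono' (integrable_const ((g0 + L * C) ^ 2))
        (((hGf_cont.norm.measurable.comp (hWmeas t)).pow_const 2).aestronglyMeasurable) ?_
      filter_upwards [hCae] with ω hω
      rw [Real.norm_eq_abs, abs_of_nonneg (by positivity)]
      have h1 : ‖Gf (W t ω)‖ ≤ g0 + L * C := by
        calc ‖Gf (W t ω)‖ ≤ g0 + L * ‖W t ω‖ := hGf_norm _
          _ ≤ g0 + L * C := by nlinarith
      nlinarith [norm_nonneg (Gf (W t ω))]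
    have E5 : D * ∫ ω, ‖Gf (W t ω)‖ ^ 2 ∂μ
        ≤ 3 / 4 * ∫ ω, tinner (Gf (W t ω)) (Mt * Gf (W t ω)) ∂μ := by
      have := integral_mono (int_G2.const_mul D) (int_tinnerM.const_mul (3 / 4))
        fun ω => E3 ω
      rwa [integral_const_mul, integral_const_mul] at this
    -- a.e. descent step
    have hae : (fun ω => f (W (t + 1) ω)
          + 3 / 8 * (γ * (N : ℝ)) * tinner (Gf (W t ω)) (H t ω * Gf (W t ω)))
        ≤ᵐ[μ] fun ω => f (W t ω) := by
      filter_upwards [hproj t] with ω hp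
      have hb := block_descent hL hgrad hlip hγ0 hN hsmall hp.1 hp.2
        (w := fun i => Wit t i ω) (fun i hi => by simpa using hrec t ω ⟨i, hi⟩)
      beta_reduce at hb
      rw [hWit0 t ω, ← hWend t ω, proj_norm_sq hp.1 hp.2] at hb
      exact hb
    have hmono : ∫ ω, f (W (t + 1) ω) ∂μ + 3 / 8 * (γ * (N : ℝ))
          * ∫ ω, tinner (Gf (W t ω)) (H t ω * Gf (W t ω)) ∂μ ≤ ∫ ω, f (W t ω) ∂μ := by
      have h1 : ∫ ω, (f (W (t + 1) ω)
            + 3 / 8 * (γ * (N : ℝ)) * tinner (Gf (W t ω)) (H t ω * Gf (W t ω))) ∂μ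
          = ∫ ω, f (W (t + 1) ω) ∂μ + 3 / 8 * (γ * (N : ℝ))
            * ∫ ω, tinner (Gf (W t ω)) (H t ω * Gf (W t ω)) ∂μ := by
        rw [integral_add (int_f (t + 1)) (int_tinnerH.const_mul _), integral_const_mul]
      rw [← h1]
      exact integral_mono_ae
        ((int_f (t + 1)).add (int_tinnerH.const_mul (3 / 8 * (γ * (N : ℝ))))) (int_f t) hae
    rw [E1] at hmono
    have hfac : (0 : ℝ) ≤ γ * N / 2 := by positivity
    have := mul_le_mul_of_nonneg_left E5 hfac
    nlinarith [this, hmono]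
  -- telescoping
  have tel : ∀ T', ∫ ω, f (W T' ω) ∂μ
      + γ * N * D / 2 * ∑ t ∈ Finset.range T', ∫ ω, ‖Gf (W t ω)‖ ^ 2 ∂μ ≤ f W0 := by
    intro T'
    induction T' with
    | zero =>
      have : (fun ω => f (W 0 ω)) = fun _ => f W0 := funext fun ω => by rw [hW0]
      rw [this]
      simp [integral_const]
    | succ k ih =>
      have := key k
      rw [Finset.sum_range_succ]
      linarith
  have hfstar : ∀ T', fstar ≤ ∫ ω, f (W T' ω) ∂μ := by
    intro T'
    have h1 : fstar = ∫ (_ : Ω), fstar ∂μ := by simp [integral_const]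
    rw [h1]
    exact integral_mono (integrable_const _) (int_f T') fun ω => hbelow _
  -- conclusion
  have hc : (0 : ℝ) < γ * N * D / 2 := by positivity
  have hsum2 : γ * N * D / 2 * ∑ t ∈ Finset.range T, ∫ ω, ‖Gf (W t ω)‖ ^ 2 ∂μ
      ≤ f W0 - fstar := by
    have := tel T
    have := hfstar T
    linarith
  have hfinal : ∑ t ∈ Finset.range T, ∫ ω, ‖Gf (W t ω)‖ ^ 2 ∂μ
      ≤ (f W0 - fstar) / (γ * N * D / 2) := by
    rw [le_div_iff₀ hc]
    linarith [hsum2, mul_comm (γ * N * D / 2) (∑ t ∈ Finset.range T, ∫ ω, ‖Gf (W t ω)‖ ^ 2 ∂μ)]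
  have heq : (2 / (γ * N * T)) * (f W0 - fstar) / D
      = (1 / T) * ((f W0 - fstar) / (γ * N * D / 2)) := by
    field_simp
  rw [heq]
  apply mul_le_mul_of_nonneg_left hfinal
  positivity
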